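/- arXiv:1701.06869 — 4 statements merged into one kernel-verified Lean document; each statement's English description precedes it below -/
import Mathlib

section
/- For every integer j ≥ 0 and every z ∈ ℂ ∖ (−∞,0], the function s ↦ (−1)^j j! (Γ(s−j)/Γ(s)) z^{j−s} extends holomorphically across s = 0, and its derivative at s = 0 equals −z^j (Log z − H_j), where Log is the principal branch of the logarithm, H_0 = 0 and H_j = Σ_{l=1}^j 1/l. -/
open Complex Filter

lemma gamma_descend (j : ℕ) (s : ℂ) (hs : ∀ k ∈ Finset.range j, s - ((k : ℂ) + 1) ≠ 0) :
    Complex.Gamma s = (∏ k ∈ Finset.range j, (s - ((k : ℂ) + 1))) * Complex.Gamma (s - j) := by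
  induction j with
  | zero => simp
  | succ n ih =>
    rw [ih (fun k hk => hs k (Finset.mem_range.mpr (Nat.lt_succ_of_lt (Finset.mem_range.mp hk)))),
      Finset.prod_range_succ]
    have hne : s - ((n : ℂ) + 1) ≠ 0 := hs n (Finset.mem_range.mpr (Nat.lt_succ_self n))
    have h := Complex.Gamma_add_one _ hne
    rw [show s - ((n : ℂ) + 1) + 1 = s - n by ring] at h
    rw [h]
    push_cast
    ring

lemma prod_range_cast_factorial (j : ℕ) :
    (∏ k ∈ Finset.range j, ((k : ℂ) + 1)) = (j.factorial : ℂ) := by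
  induction j with
  | zero => simp
  | succ n ih => rw [Finset.prod_range_succ, ih, Nat.factorial_succ]; push_cast; ring

/-- For every integer `j ≥ 0` and every `z ∈ ℂ ∖ (-∞,0]`, the function
`s ↦ (-1)^j j! (Γ(s-j)/Γ(s)) z^{j-s}` extends holomorphically across `s = 0`, and the
derivative of the extension at `s = 0` equals `-z^j (Log z - H_j)`, where `Log` is the
principal branch of the logarithm and `H_j` is the `j`-th harmonic number. -/
theorem gamma_ratio_power_deriv_at_zero
    (j : ℕ) (z : ℂ) (hz : ¬(z.im = 0 ∧ z.re ≤ 0)) :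
    ∃ g : ℂ → ℂ, AnalyticAt ℂ g 0 ∧
      (∀ᶠ s in nhdsWithin (0 : ℂ) {(0 : ℂ)}ᶜ,
        g s = (-1 : ℂ) ^ j * (j.factorial : ℂ) *
          (Complex.Gamma (s - j) / Complex.Gamma s) * z ^ ((j : ℂ) - s)) ∧
      deriv g 0 =
        -(z ^ j * (Complex.log z - ∑ l ∈ Finset.range j, (1 : ℂ) / (l + 1))) := by
  classical
  have hz0 : z ≠ 0 := by
    intro h; exact hz (by simp [h])
  set P : ℂ → ℂ := fun s => ∏ k ∈ Finset.range j, (((k : ℂ) + 1) / (((k : ℂ) + 1) - s)) with hP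
  set g : ℂ → ℂ := fun s => P s * Complex.exp (((j : ℂ) - s) * Complex.log z) with hg
  have hk1 : ∀ k : ℕ, ((k : ℂ) + 1) ≠ 0 := fun k => Nat.cast_add_one_ne_zero k
  refine ⟨g, ?_, ?_, ?_⟩
  · -- analyticity
    have hPa : AnalyticAt ℂ P 0 := by
      apply Finset.analyticAt_fun_prod
      intro k _
      exact analyticAt_const.div (analyticAt_const.sub analyticAt_id)
        (by simpa using hk1 k)
    exact hPa.mul (((analyticAt_const.sub analyticAt_id).mul analyticAt_const).cexp)
  · -- eventual equality
    have hmem : Metric.ball (0 : ℂ) (1 / 2) ∈ nhdsWithin (0 : ℂ) {(0 : ℂ)}ᶜ :=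
      nhdsWithin_le_nhds (Metric.ball_mem_nhds _ (by norm_num))
    filter_upwards [hmem, self_mem_nhdsWithin] with s hs hs0
    have hsn : ‖s‖ < 1 / 2 := by simpa [Complex.dist_eq] using hs
    have hs0' : s ≠ 0 := hs0
    have hfac : ∀ k ∈ Finset.range j, s - ((k : ℂ) + 1) ≠ 0 := by
      intro k _
      intro h
      have : s = (k : ℂ) + 1 := by linear_combination h
      rw [this] at hsn
      have : (1 : ℝ) ≤ ‖(k : ℂ) + 1‖ := by
        have : ((k : ℂ) + 1) = ((k + 1 : ℕ) : ℂ) := by push_cast; ring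
        rw [this, Complex.norm_natCast]
        exact_mod_cast Nat.one_le_iff_ne_zero.mpr (Nat.succ_ne_zero k)
      linarith
    have hGs : Complex.Gamma s ≠ 0 := by
      apply Complex.Gamma_ne_zero
      intro m
      match m with
      | 0 => simpa using hs0'
      | (m + 1) =>
        intro h
        rw [h] at hsn
        have : (1 : ℝ) ≤ ‖(-(m + 1 : ℕ) : ℂ)‖ := by
          rw [norm_neg, Complex.norm_natCast]
          exact_mod_cast Nat.one_le_iff_ne_zero.mpr (Nat.succ_ne_zero m)
        push_cast at this hsn
        linarith
    have key := gamma_descend j s hfac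
    have hprodne : (∏ k ∈ Finset.range j, (s - ((k : ℂ) + 1))) ≠ 0 :=
      Finset.prod_ne_zero_iff.mpr hfac
    have hratio : Complex.Gamma (s - j) / Complex.Gamma s =
        (∏ k ∈ Finset.range j, (s - ((k : ℂ) + 1)))⁻¹ := by
      rw [key]
      have hGsj : Complex.Gamma (s - j) ≠ 0 := by
        intro h; rw [key, h, mul_zero] at hGs; exact hGs rfl
      rw [mul_comm]
      field_simp
    have hcpow : z ^ ((j : ℂ) - s) = Complex.exp (((j : ℂ) - s) * Complex.log z) := by
      rw [Complex.cpow_def_of_ne_zero hz0, mul_comm]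
    have hPs : P s = (-1 : ℂ) ^ j * (j.factorial : ℂ) *
        (∏ k ∈ Finset.range j, (s - ((k : ℂ) + 1)))⁻¹ := by
      simp only [hP]
      rw [Finset.prod_div_distrib]
      have h1 := prod_range_cast_factorial j
      have h2 : (∏ k ∈ Finset.range j, (((k : ℂ) + 1) - s)) =
          (-1 : ℂ) ^ j * ∏ k ∈ Finset.range j, (s - ((k : ℂ) + 1)) := by
        calc (∏ k ∈ Finset.range j, (((k : ℂ) + 1) - s))
            = ∏ k ∈ Finset.range j, ((-1 : ℂ) * (s - ((k : ℂ) + 1))) :=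
              Finset.prod_congr rfl fun k _ => by ring
          _ = (-1 : ℂ) ^ j * ∏ k ∈ Finset.range j, (s - ((k : ℂ) + 1)) := by
              rw [Finset.prod_mul_distrib, Finset.prod_const, Finset.card_range]
      rw [h1, h2, div_eq_mul_inv, mul_inv]
      have hneg : ((-1 : ℂ) ^ j)⁻¹ = (-1 : ℂ) ^ j := by
        rcases Nat.even_or_odd j with h | h
        · rw [h.neg_one_pow]; norm_num
        · rw [h.neg_one_pow]; norm_num
      rw [hneg]; ring
    show P s * Complex.exp (((j : ℂ) - s) * Complex.log z) = _
    rw [hPs, hratio, hcpow]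
  · -- derivative
    have hPd : HasDerivAt P (∑ k ∈ Finset.range j, (1 : ℂ) / ((k : ℂ) + 1)) 0 := by
      have := HasDerivAt.fun_finsetProd (u := Finset.range j)
        (f := fun k s => ((k : ℂ) + 1) / (((k : ℂ) + 1) - s))
        (f' := fun k => (1 : ℂ) / ((k : ℂ) + 1)) (x := (0 : ℂ)) ?_
      · refine this.congr_deriv (Eq.symm ?_)
        apply Finset.sum_congr rfl
        intro k _
        have : ∀ i ∈ (Finset.range j).erase k, ((i : ℂ) + 1) / (((i : ℂ) + 1) - 0) = 1 := by
          intro i _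
          rw [sub_zero, div_self (hk1 i)]
        rw [Finset.prod_congr rfl this, Finset.prod_const_one, one_smul]
      · intro k _
        have h1 : HasDerivAt (fun s : ℂ => ((k : ℂ) + 1) - s) (-1) 0 :=
          (hasDerivAt_const _ _).sub (hasDerivAt_id _) |>.congr_deriv (by ring)
        have h2 := (hasDerivAt_const (0 : ℂ) ((k : ℂ) + 1)).div h1 (by simpa using hk1 k)
        refine h2.congr_deriv (Eq.symm ?_)
        field_simp [hk1 k]
        ring
    have hEd : HasDerivAt (fun s : ℂ => Complex.exp (((j : ℂ) - s) * Complex.log z))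
        (-Complex.log z * Complex.exp (((j : ℂ) - 0) * Complex.log z)) 0 := by
      have h1 : HasDerivAt (fun s : ℂ => ((j : ℂ) - s) * Complex.log z) (-Complex.log z) 0 := by
        have := ((hasDerivAt_const (0 : ℂ) ((j : ℂ))).sub (hasDerivAt_id 0)).mul_const
          (Complex.log z)
        exact this.congr_deriv (by ring)
      simpa [mul_comm] using h1.cexp
    have hgd : HasDerivAt g
        ((∑ k ∈ Finset.range j, (1 : ℂ) / ((k : ℂ) + 1)) *
          Complex.exp (((j : ℂ) - 0) * Complex.log z) +
         P 0 * (-Complex.log z * Complex.exp (((j : ℂ) - 0) * Complex.log z))) 0 :=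
      hPd.mul hEd
    rw [hgd.deriv]
    have hP0 : P 0 = 1 := by
      rw [hP]
      apply Finset.prod_eq_one
      intro k _
      rw [sub_zero, div_self (hk1 k)]
    have hE0 : Complex.exp (((j : ℂ) - 0) * Complex.log z) = z ^ j := by
      rw [sub_zero, mul_comm, ← Complex.cpow_def_of_ne_zero hz0, Complex.cpow_natCast]
    rw [hP0, hE0]
    ring
end

section
/- Let f be a meromorphic function on ℂ such that there exist complex numbers c_n, an increasing sequence of reals q_n with q_1 > 1, and σ ∈ ℝ with log f(w) = Σ_{n=1}^∞ c_n q_n^{−w} converging absolutely and uniformly on every half-plane Re(w) ≥ σ + ε. Fix z ∈ X_f = {z ∈ ℂ : z − ρ ∉ (−∞,0] for all zeros and poles ρ of f}. Then the integral I(s,z) = ∫₀^∞ (f'/f)(z+y) y^{−s} dy converges absolutely for every s in the half-plane Re(s) < 1 and defines a holomorphic function of s there. -/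
open Complex Filter MeasureTheory Asymptotics
open scoped Topology

/-!
Every point of the ray `z + [0, ∞)` has meromorphic order `0`, so near each of its points `f'/f`
agrees, off that point, with a holomorphic function: `t ↦ (f'/f)(z + t)` is locally integrable on
`(0, ∞)` and bounded near `0`. Far out on the ray `f = exp D` with `D` the Dirichlet series of
`log f`, so `f'/f = D'`, and termwise differentiation gives `|D'(w)| = O(q₀ ^ (-Re w))`, which is
exponential decay in `t`. The integral is the Mellin transform of `t ↦ (f'/f)(z + t)` at `1 - s`,
hence converges and is holomorphic for `Re s < 1`.
-/

lemma exists_analyticAt_logDeriv_eventuallyEq {f : ℂ → ℂ} {x : ℂ}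
    (hf : MeromorphicAt f x) (h0 : meromorphicOrderAt f x = 0) :
    ∃ g : ℂ → ℂ, AnalyticAt ℂ g x ∧ logDeriv f =ᶠ[𝓝[≠] x] g := by
  obtain ⟨g, hg, hgx, hfg⟩ := (meromorphicOrderAt_eq_int_iff (n := 0) hf).1 (mod_cast h0)
  refine ⟨logDeriv g, hg.deriv.div hg hgx, logDeriv_congr_nhdsNE ?_⟩
  simpa [EventuallyEq] using hfg

lemma exists_continuousAt_eventuallyEq_logDeriv_comp_add_ofReal {f : ℂ → ℂ} {z : ℂ}
    {t₀ : ℝ} (hf : MeromorphicAt f (z + t₀)) (h0 : meromorphicOrderAt f (z + t₀) = 0) :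
    ∃ h : ℝ → ℂ, (∀ᶠ t in 𝓝 t₀, ContinuousAt h t) ∧
      (fun t : ℝ => logDeriv f (z + t)) =ᶠ[𝓝[≠] t₀] h := by
  obtain ⟨g, hg, hfg⟩ := exists_analyticAt_logDeriv_eventuallyEq hf h0
  have hray : Continuous fun t : ℝ => z + t := by fun_prop
  have hray_ne : Tendsto (fun t : ℝ => z + t) (𝓝[≠] t₀) (𝓝[≠] (z + t₀)) :=
    tendsto_nhdsWithin_of_tendsto_nhds_of_eventually_within _ hray.continuousWithinAt.tendsto
      (eventually_nhdsWithin_of_forall fun t ht => by simpa using ht)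
  refine ⟨fun t => g (z + t), ?_, hray_ne.eventually hfg⟩
  filter_upwards [hray.continuousAt.eventually hg.eventually_analyticAt] with t ht
  exact ht.continuousAt.comp_of_eq hray.continuousAt rfl

lemma integrableAtFilter_nhds_of_eventuallyEq_nhdsNE {E : Type*} [NormedAddCommGroup E]
    {F h : ℝ → E} {t₀ : ℝ} (hh : ∀ᶠ t in 𝓝 t₀, ContinuousAt h t) (hF : F =ᶠ[𝓝[≠] t₀] h) :
    IntegrableAtFilter F (𝓝 t₀) := by
  obtain ⟨ε, hε, hball⟩ :=
    Metric.eventually_nhds_iff.1 (hh.and (eventually_nhdsWithin_iff.1 hF))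
  set I := Set.Icc (t₀ - ε / 2) (t₀ + ε / 2)
  have hsub : I ⊆ Metric.ball t₀ ε := fun t ht => by
    rw [Metric.mem_ball, Real.dist_eq, abs_lt]; constructor <;> linarith [ht.1, ht.2]
  have hIh : IntegrableOn h I :=
    ContinuousOn.integrableOn_Icc fun t ht => (hball (hsub ht)).1.continuousWithinAt
  refine ⟨I, Icc_mem_nhds (by linarith) (by linarith), hIh.congr_fun_ae ?_⟩
  rw [EventuallyEq, ae_restrict_iff' measurableSet_Icc]
  filter_upwards [compl_mem_ae_iff.2 (measure_singleton t₀)] with t ht htI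
  exact ((hball (hsub htI)).2 ht).symm

noncomputable def generalizedDirichletSeries (c : ℕ → ℂ) (q : ℕ → ℝ) (w : ℂ) : ℂ :=
  ∑' n, c n * (q n : ℂ) ^ (-w)

lemma norm_mul_ofReal_cpow_neg (c : ℂ) {q : ℝ} (hq : 0 < q) (w : ℂ) :
    ‖c * (q : ℂ) ^ (-w)‖ = ‖c‖ * q ^ (-w.re) := by
  rw [norm_mul, norm_cpow_eq_rpow_re_of_pos hq, neg_re]

lemma hasDerivAt_mul_ofReal_cpow_neg (c : ℂ) {q : ℝ} (hq : 0 < q) (w : ℂ) :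
    HasDerivAt (fun w : ℂ => c * (q : ℂ) ^ (-w)) (-(c * Real.log q * (q : ℂ) ^ (-w))) w := by
  refine (((hasDerivAt_id w).neg.const_cpow (Or.inl (ofReal_ne_zero.2 hq.ne'))).const_mul
    c).congr_deriv ?_
  simp only [Pi.neg_apply, id_eq, ofReal_log hq.le]
  ring

lemma differentiable_mul_ofReal_cpow_neg (c : ℂ) {q : ℝ} (hq : 0 < q) :
    Differentiable ℂ fun w : ℂ => c * (q : ℂ) ^ (-w) :=
  fun w => (hasDerivAt_mul_ofReal_cpow_neg c hq w).differentiableAt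

lemma logDeriv_eq_deriv_of_eventuallyEq_exp {f g : ℂ → ℂ} {w : ℂ}
    (hfg : f =ᶠ[𝓝 w] fun v => exp (g v)) (hg : DifferentiableAt ℂ g w) :
    logDeriv f w = deriv g w := by
  rw [(logDeriv_congr_nhds hfg).eq_of_nhds]
  exact (logDeriv_comp differentiableAt_exp hg).trans (by simp [Complex.logDeriv_exp])

namespace generalizedDirichletSeries

variable {c : ℕ → ℂ} {q : ℕ → ℝ} {σ : ℝ}

lemma norm_term_le (hq : ∀ n, 1 ≤ q n) {w : ℂ} (hw : σ ≤ w.re) (n : ℕ) :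
    ‖c n * (q n : ℂ) ^ (-w)‖ ≤ ‖c n‖ * q n ^ (-σ) := by
  rw [norm_mul_ofReal_cpow_neg _ (zero_lt_one.trans_le (hq n))]
  gcongr
  exact hq n

lemma differentiableOn (hq : ∀ n, 1 ≤ q n) (hc : Summable fun n => ‖c n‖ * q n ^ (-σ)) :
    DifferentiableOn ℂ (generalizedDirichletSeries c q) {w | σ < w.re} :=
  differentiableOn_tsum_of_summable_norm hc
    (fun n => (differentiable_mul_ofReal_cpow_neg _ (zero_lt_one.trans_le (hq n))).differentiableOn)
    (isOpen_lt continuous_const continuous_re) (fun n _ hw => norm_term_le hq hw.le n)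

lemma hasSum_deriv (hq : ∀ n, 1 ≤ q n) (hc : Summable fun n => ‖c n‖ * q n ^ (-σ))
    {w : ℂ} (hw : σ < w.re) :
    HasSum (fun n => -(c n * Real.log (q n) * (q n : ℂ) ^ (-w)))
      (deriv (generalizedDirichletSeries c q) w) := by
  have := hasSum_deriv_of_summable_norm hc
    (fun n => (differentiable_mul_ofReal_cpow_neg _ (zero_lt_one.trans_le (hq n))).differentiableOn)
    (isOpen_lt continuous_const continuous_re) (fun n _ hw => norm_term_le hq hw.le n) hw
  simp only [(hasDerivAt_mul_ofReal_cpow_neg _ (zero_lt_one.trans_le (hq _)) w).deriv] at this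
  exact this

lemma logDeriv_eq_deriv {f : ℂ → ℂ} (hq : ∀ n, 1 ≤ q n)
    (hc : Summable fun n => ‖c n‖ * q n ^ (-σ))
    (hf : ∀ w : ℂ, σ < w.re → f w = exp (generalizedDirichletSeries c q w)) {w : ℂ}
    (hw : σ < w.re) :
    logDeriv f w = deriv (generalizedDirichletSeries c q) w := by
  have hH : {v : ℂ | σ < v.re} ∈ 𝓝 w :=
    (isOpen_lt continuous_const continuous_re).mem_nhds hw
  exact logDeriv_eq_deriv_of_eventuallyEq_exp (Filter.mem_of_superset hH hf)
    ((differentiableOn hq hc).differentiableAt hH)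

lemma norm_deriv_le (hq : ∀ n, 1 ≤ q n) (hmono : ∀ n, q 0 ≤ q n)
    (hc : Summable fun n => ‖c n‖ * q n ^ (-σ)) {w : ℂ} (hw : σ + 1 ≤ w.re) :
    ‖deriv (generalizedDirichletSeries c q) w‖ ≤
      (∑' n, ‖c n‖ * q n ^ (-σ)) * q 0 ^ (σ + 1 - w.re) := by
  refine (hasSum_deriv hq hc (by linarith)).norm_le_of_bounded (hc.hasSum.mul_right _) fun n => ?_
  have hqn : 0 < q n := zero_lt_one.trans_le (hq n)
  have hlog : 0 ≤ Real.log (q n) := Real.log_nonneg (hq n)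
  calc ‖-(c n * Real.log (q n) * (q n : ℂ) ^ (-w))‖
      = ‖c n‖ * (Real.log (q n) * q n ^ (-w.re)) := by
        rw [norm_neg, norm_mul, norm_mul, norm_real, Real.norm_of_nonneg hlog,
          norm_cpow_eq_rpow_re_of_pos hqn, neg_re]
        ring
    _ ≤ ‖c n‖ * (q n * q n ^ (-w.re)) := by gcongr; exact Real.log_le_self hqn.le
    _ = ‖c n‖ * (q n ^ (-σ) * q n ^ (σ + 1 - w.re)) := by
        nth_rewrite 1 [← Real.rpow_one (q n)]
        rw [← Real.rpow_add hqn, ← Real.rpow_add hqn]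
        ring_nf
    _ ≤ ‖c n‖ * (q n ^ (-σ) * q 0 ^ (σ + 1 - w.re)) := by
        gcongr ‖c n‖ * (q n ^ (-σ) * ?_)
        exact Real.rpow_le_rpow_of_nonpos (zero_lt_one.trans_le (hq 0)) (hmono n) (by linarith)
    _ = ‖c n‖ * q n ^ (-σ) * q 0 ^ (σ + 1 - w.re) := (mul_assoc ..).symm

lemma isBigO_deriv_add_ofReal_atTop (hq : ∀ n, 1 ≤ q n) (hmono : ∀ n, q 0 ≤ q n)
    (hc : Summable fun n => ‖c n‖ * q n ^ (-σ)) (z : ℂ) :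
    (fun t : ℝ => deriv (generalizedDirichletSeries c q) (z + t)) =O[atTop]
      fun t => Real.exp (-Real.log (q 0) * t) := by
  set S := ∑' n, ‖c n‖ * q n ^ (-σ)
  have hq0 : 0 < q 0 := zero_lt_one.trans_le (hq 0)
  refine IsBigO.of_bound (S * q 0 ^ (σ + 1 - z.re)) ?_
  filter_upwards [eventually_ge_atTop (σ + 1 - z.re)] with t ht
  calc ‖deriv (generalizedDirichletSeries c q) (z + t)‖
      ≤ S * q 0 ^ (σ + 1 - (z + t).re) := norm_deriv_le hq hmono hc (by simp; linarith)
    _ = S * q 0 ^ (σ + 1 - z.re) * ‖Real.exp (-Real.log (q 0) * t)‖ := by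
        rw [Real.norm_of_nonneg (Real.exp_pos _).le, mul_assoc, neg_mul, ← mul_neg,
          ← Real.rpow_def_of_pos hq0, ← Real.rpow_add hq0]
        simp only [add_re, ofReal_re]
        ring_nf

end generalizedDirichletSeries

section MellinReflected

variable {F : ℝ → ℂ} {a b : ℝ}

lemma integrableOn_mul_cpow_neg_of_isBigO (ha : 0 < a) (hF : LocallyIntegrableOn F (Set.Ioi 0))
    (hF_top : F =O[atTop] fun t => Real.exp (-a * t)) (hF_bot : F =O[𝓝[>] 0] (· ^ (-b)))
    {s : ℂ} (hs : s.re < 1 - b) :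
    IntegrableOn (fun t : ℝ => F t * (t : ℂ) ^ (-s)) (Set.Ioi 0) := by
  have := mellinConvergent_of_isBigO_rpow_exp (s := 1 - s) ha hF hF_top hF_bot
    (by rw [sub_re, one_re]; linarith)
  simpa [MellinConvergent, mul_comm] using this

lemma differentiableOn_integral_mul_cpow_neg_of_isBigO (ha : 0 < a)
    (hF : LocallyIntegrableOn F (Set.Ioi 0))
    (hF_top : F =O[atTop] fun t => Real.exp (-a * t)) (hF_bot : F =O[𝓝[>] 0] (· ^ (-b))) :
    DifferentiableOn ℂ (fun s : ℂ => ∫ t in Set.Ioi (0 : ℝ), F t * (t : ℂ) ^ (-s))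
      {s : ℂ | s.re < 1 - b} := by
  have hmellin : (fun s : ℂ => ∫ t in Set.Ioi (0 : ℝ), F t * (t : ℂ) ^ (-s)) =
      fun s => mellin F (1 - s) := by
    ext s
    simp [mellin, mul_comm]
  rw [hmellin]
  intro s hs
  have hmellin_s : DifferentiableAt ℂ (mellin F) (1 - s) :=
    mellin_differentiableAt_of_isBigO_rpow_exp ha hF hF_top hF_bot
      (by rw [sub_re, one_re]; linarith [show s.re < 1 - b from hs])
  exact (hmellin_s.comp s (differentiableAt_id.const_sub 1)).differentiableWithinAt

end MellinReflected

/-- Let `f` be meromorphic on `ℂ` with `log f` given by an absolutely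
and uniformly convergent generalized Dirichlet series on half-planes `Re w ≥ σ + ε`, and
fix `z ∈ X_f` (so `z - ρ ∉ (-∞,0]` for every zero or pole `ρ` of `f`).  Then the
integral `I(s,z) = ∫₀^∞ (f'/f)(z+y) y^{-s} dy` converges absolutely for every `s` with
`Re s < 1`, and defines a holomorphic function of `s` on that half-plane. -/
theorem zetaType_integral_holomorphic_left_halfplane
    (f : ℂ → ℂ) (hf : MeromorphicOn f Set.univ)
    (c : ℕ → ℂ) (q : ℕ → ℝ) (hq₁ : 1 < q 0) (hq : StrictMono q) (σ : ℝ)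
    (hconv : ∀ ε : ℝ, 0 < ε → Summable (fun n : ℕ => ‖c n‖ * q n ^ (-(σ + ε))))
    (hrep : ∀ w : ℂ, σ < w.re →
      f w = Complex.exp (∑' n : ℕ, c n * (q n : ℂ) ^ (-w)))
    (z : ℂ)
    (hz : ∀ ρ : ℂ, meromorphicOrderAt f ρ ≠ 0 →
      ¬((z - ρ).im = 0 ∧ (z - ρ).re ≤ 0)) :
    (∀ s : ℂ, s.re < 1 →
      IntegrableOn (fun t : ℝ => logDeriv f (z + t) * (t : ℂ) ^ (-s)) (Set.Ioi 0)) ∧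
    DifferentiableOn ℂ
      (fun s : ℂ => ∫ t in Set.Ioi (0 : ℝ), logDeriv f (z + t) * (t : ℂ) ^ (-s))
      {s : ℂ | s.re < 1} := by
  set F : ℝ → ℂ := fun t => logDeriv f (z + t)
  have hq_ge : ∀ n, q 0 ≤ q n := fun n => hq.monotone n.zero_le
  have hq_one : ∀ n, 1 ≤ q n := fun n => hq₁.le.trans (hq_ge n)
  have hlocal : ∀ t₀ : ℝ, 0 ≤ t₀ →
      ∃ h : ℝ → ℂ, (∀ᶠ t in 𝓝 t₀, ContinuousAt h t) ∧ F =ᶠ[𝓝[≠] t₀] h := by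
    intro t₀ ht₀
    refine exists_continuousAt_eventuallyEq_logDeriv_comp_add_ofReal (hf _ trivial) ?_
    by_contra h0
    exact hz _ h0 ⟨by simp, by simpa using ht₀⟩
  have hF_loc : LocallyIntegrableOn F (Set.Ioi 0) := fun t ht => by
    obtain ⟨h, hh, hFh⟩ := hlocal t ht.le
    exact (integrableAtFilter_nhds_of_eventuallyEq_nhdsNE hh hFh).filter_mono nhdsWithin_le_nhds
  have hF_bot : F =O[𝓝[>] 0] (· ^ (-(0 : ℝ))) := by
    obtain ⟨h, hh, hFh⟩ := hlocal 0 le_rfl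
    have := ((hh.self_of_nhds.tendsto.mono_left nhdsWithin_le_nhds).isBigO_one ℝ).congr'
      hFh.symm EventuallyEq.rfl
    simpa using this.mono (nhdsGT_le_nhdsNE 0)
  have hc : Summable fun n => ‖c n‖ * q n ^ (-(σ + 1)) := hconv 1 one_pos
  have hF_top : F =O[atTop] fun t => Real.exp (-Real.log (q 0) * t) := by
    refine IsBigO.trans (EventuallyEq.isBigO ?_)
      (generalizedDirichletSeries.isBigO_deriv_add_ofReal_atTop hq_one hq_ge hc z)
    filter_upwards [eventually_gt_atTop (σ + 1 - z.re)] with t ht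
    exact generalizedDirichletSeries.logDeriv_eq_deriv hq_one hc
      (fun w hw => hrep w (by linarith)) (by simp; linarith)
  have ha : 0 < Real.log (q 0) := Real.log_pos hq₁
  refine ⟨fun s hs => integrableOn_mul_cpow_neg_of_isBigO ha hF_loc hF_top hF_bot
    (by simpa using hs), ?_⟩
  simpa using differentiableOn_integral_mul_cpow_neg_of_isBigO ha hF_loc hF_top hF_bot
end

section
/- For all positive integers n, m and every nonnegative integer k, one has the binomial identity Σ_{j=0}^{k} (−1)^j · C(2n, k−j) · C(2n+m+j−1, m+j) = C(2n+m−1, m+k) · C(m+k−1, k), where C(a,b) denotes the binomial coefficient. -/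
/-!
Write `N = 2n` and `m = b + 1`. The summand telescopes: it equals `h j - h (j + 1)` for
`h t = (-1)^t C(N+b+t, b+k+1) C(b+k, b+t)`, so the sum is `h 0 - h (k + 1) = h 0`, which is the
right-hand side. Each telescoping step is a three-term identity following from Pascal's rule and
the trinomial revision `C(n, k) C(k, s) = C(n, s) C(n-s, k-s)`.
-/

open Finset

theorem Nat.choose_mul_choose_add_choose_mul_choose (N B r : ℕ) :
    (N + B + 1).choose (B + r + 1) * (B + r).choose (B + 1)
        + (N + B).choose (B + r + 1) * (B + r).choose B
      = N.choose r * (N + B).choose (B + 1) := by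
  have hpascal : (N + B + 1).choose (B + r + 1) * (B + r).choose (B + 1)
        + (N + B).choose (B + r + 1) * (B + r).choose B
      = (N + B).choose (B + r) * (B + r).choose (B + 1)
        + (N + B).choose (B + r + 1) * (B + r + 1).choose (B + 1) := by
    rw [Nat.choose_succ_succ', Nat.choose_succ_succ' (B + r) B]
    ring
  have htrinomial : ∀ s, (N + B).choose (B + s + 1) * (B + s + 1).choose (B + 1)
      = (N + B).choose (B + 1) * (N - 1).choose s := fun s => by
    rw [Nat.choose_mul (by omega)]
    congr 2 <;> omega
  rw [hpascal, htrinomial]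
  rcases r with _ | s
  · simp
  rcases N with _ | M
  · simp [Nat.choose_eq_zero_iff]
  rw [← add_assoc, htrinomial, ← mul_add, add_tsub_cancel_right, ← Nat.choose_succ_succ',
    mul_comm]

theorem sum_range_neg_one_pow_mul_choose_mul_choose (N b k : ℕ) :
    ∑ j ∈ range (k + 1), (-1 : ℤ) ^ j * N.choose (k - j) * (N + (b + j)).choose (b + j + 1)
      = (N + b).choose (b + k + 1) * (b + k).choose k := by
  set h : ℕ → ℤ := fun t =>
    (-1) ^ t * (N + (b + t)).choose (b + k + 1) * (b + k).choose (b + t)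
  have hstep : ∀ j ∈ range (k + 1),
      (-1 : ℤ) ^ j * N.choose (k - j) * (N + (b + j)).choose (b + j + 1) = h j - h (j + 1) := by
    intro j hj
    obtain ⟨r, rfl⟩ : ∃ r, k = j + r := ⟨k - j, by grind⟩
    have key := congrArg (Nat.cast (R := ℤ))
      (Nat.choose_mul_choose_add_choose_mul_choose N (b + j) r)
    push_cast at key
    simp only [h, add_tsub_cancel_left, ← add_assoc, pow_succ] at key ⊢
    linear_combination -(-1 : ℤ) ^ j * key
  have hlast : h (k + 1) = 0 := by simp [h, ← add_assoc]
  rw [sum_congr rfl hstep, sum_range_sub', hlast, sub_zero]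
  simp only [h, pow_zero, one_mul, add_zero]
  rw [Nat.choose_symm_add]

theorem binomial_identity_convolution_one_general
    (n m : ℕ) (hm : 0 < m) (k : ℕ) :
    ∑ j ∈ Finset.range (k + 1),
      (-1 : ℤ) ^ j * ((2 * n).choose (k - j) : ℤ) *
        ((2 * n + m + j - 1).choose (m + j) : ℤ) =
      ((2 * n + m - 1).choose (m + k) : ℤ) * ((m + k - 1).choose k : ℤ) := by
  obtain ⟨b, rfl⟩ : ∃ b, m = b + 1 := ⟨m - 1, by omega⟩
  have hupper : ∀ j, 2 * n + (b + 1) + j - 1 = 2 * n + (b + j) := fun j => by omega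
  have hlower : ∀ j, b + 1 + j = b + j + 1 := fun j => by omega
  rw [show 2 * n + (b + 1) - 1 = 2 * n + b by omega, show b + 1 + k - 1 = b + k by omega]
  simp only [hupper, hlower]
  exact sum_range_neg_one_pow_mul_choose_mul_choose (2 * n) b k

/-- For all positive integers `n, m` and every nonnegative integer
`k`, one has
`∑_{j=0}^{k} (-1)^j C(2n, k-j) C(2n+m+j-1, m+j) = C(2n+m-1, m+k) C(m+k-1, k)`. -/
theorem binomial_identity_convolution_one
    (n m : ℕ) (hn : 0 < n) (hm : 0 < m) (k : ℕ) :
    ∑ j ∈ Finset.range (k + 1),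
      (-1 : ℤ) ^ j * ((2 * n).choose (k - j) : ℤ) *
        ((2 * n + m + j - 1).choose (m + j) : ℤ) =
      ((2 * n + m - 1).choose (m + k) : ℤ) * ((m + k - 1).choose k : ℤ) :=
  binomial_identity_convolution_one_general n m hm k
end

section
/- Let n be a positive integer and k an integer with 0 ≤ k ≤ n−1. For every z ∈ ℂ with z, z−1, ..., z−k ∉ (−∞,0] and every s with Re(s) > 2n, one has the identity Σ_{l=1}^∞ [ C(2n+l−1, l+k)·C(l+k−1, k) + C(2n+l−1, k)·C(2n+l−k−2, l−1) ] (z+l)^{−s} = Σ_{j=0}^{k} (−1)^j C(2n, k−j) ( ζ_{2n}(s, z−j) + ζ_{2n}(s, z+j+1) ) + (−1)^{k+1} (z−k)^{−s}, where ζ_{2n}(s,w) = Σ_{l=0}^∞ C(2n+l−1, l)(w+l)^{−s} is the multiple Hurwitz zeta function. -/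
open Complex

/-- The multiple Hurwitz zeta function
`ζ_m(s, w) = ∑_{l=0}^∞ C(m+l-1, l) (w+l)^{-s}` (principal branch powers). -/
noncomputable def multipleHurwitzZeta (m : ℕ) (s w : ℂ) : ℂ :=
  ∑' l : ℕ, (((m + l - 1).choose l : ℕ) : ℂ) * (w + (l : ℂ)) ^ (-s)

/-!
Expanding `ζ_m(s, z - j)` and `ζ_m(s, z + j + 1)` in the common terms `(z + i + 1)^{-s}`, `i ≥ 0`,
plus the leading terms `(z - t)^{-s}`, `t ≤ j`, of the former reduces the identity to finite
alternating binomial sums. The coefficient of `(z + i + 1)^{-s}` telescopes, by induction on `k`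
with a Pascal-type recurrence, to the closed form on the left. The leading terms cancel except
for `(z - k)^{-s}`, since `∑ᵢ (-1)^i C(m, K-i) C(m+i-1, i)` is the coefficient of `x^K` in
`(1 + x)^m (1 + x)^{-m} = 1`. All series converge absolutely for `Re s > m` because the
coefficients grow like `l^{m-1}`.
-/

open Finset Filter Asymptotics

theorem Nat.add_choose_mul_choose (p q r : ℕ) :
    (p + q).choose (p + r) * (p + r).choose r = (p + q).choose p * q.choose r := by
  rw [← @Nat.choose_symm_add p r, Nat.choose_mul (Nat.le_add_right p r), Nat.add_sub_cancel_left,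
    Nat.add_sub_cancel_left]

theorem Nat.choose_mul_choose_add_step {M K : ℕ} (hM : 0 < M) (m : ℕ) :
    (M + m).choose (m + K + 2) * (m + K + 1).choose (K + 1)
        + (M + m + 1).choose (m + K + 2) * (m + K + 1).choose K
      = M.choose (K + 1) * (M + m).choose (m + 1) := by
  obtain ⟨a, rfl⟩ : ∃ a, M = a + 1 := ⟨M - 1, by omega⟩
  -- Pascal's rule and `Nat.add_choose_mul_choose` turn both sides into
  -- `C(M+m, m+1) (C(M-1, K) + C(M-1, K+1))`.
  have h₁ := Nat.add_choose_mul_choose (m + 1) a (K + 1)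
  have h₀ := Nat.add_choose_mul_choose (m + 1) a K
  have p₁ := Nat.choose_succ_succ' (a + 1 + m) (m + K + 1)
  have p₂ := Nat.choose_succ_succ' (m + K + 1) K
  have p₃ := Nat.choose_succ_succ' a K
  zify at *
  ring_nf at *
  linear_combination (1 + m + K).choose K * p₁ - (1 + a + m).choose (2 + m + K) * p₂ + h₁ + h₀
    - (1 + a + m).choose (1 + m) * p₃

theorem Nat.choose_mul_choose_sub_step {M k : ℕ} (hk : k + 1 < M) (i : ℕ) :
    (M + i + 1).choose (k + 1) * (M + i - k - 1).choose (i + 1)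
        + (M + i).choose k * (M + i - k - 1).choose i
      = M.choose (k + 1) * (M + i).choose (i + 1) := by
  obtain ⟨a, rfl⟩ : ∃ a, M = a + k + 2 := ⟨M - k - 2, by omega⟩
  rw [show a + k + 2 + i - k - 1 = a + i + 1 by omega]
  -- Pascal's rule and `Nat.add_choose_mul_choose` turn both sides into
  -- `C(M+i, i+1) (C(M-1, k) + C(M-1, k+1))`.
  have h₁ := Nat.add_choose_mul_choose (i + 1) (a + k + 1) (k + 1)
  have h₀ := Nat.add_choose_mul_choose (i + 1) (a + k + 1) k
  have hk₁ := Nat.add_choose_mul_choose (k + 1) (a + i + 1) (i + 1)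
  have hk₀ := Nat.add_choose_mul_choose k (a + i + 2) (i + 1)
  have s₀ := Nat.choose_symm_add (a := k) (b := i + 1)
  have s₁ := Nat.choose_symm_add (a := k + 1) (b := i + 1)
  have p₁ := Nat.choose_succ_succ' (a + k + 2 + i) k
  have p₂ := Nat.choose_succ_succ' (a + i + 1) i
  have p₃ := Nat.choose_succ_succ' (a + k + 1) k
  zify at *
  ring_nf at *
  linear_combination (1 + a + i).choose (1 + i) * p₁ - (2 + a + k + i).choose k * p₂ - hk₀ - hk₁
    + h₀ + h₁ - (2 + a + k + i).choose (1 + i) * p₃ - (2 + a + k + i).choose (1 + k + i) * s₀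
    - (2 + a + k + i).choose (2 + k + i) * s₁

section AlternatingSums

variable {R : Type*} [CommRing R]

theorem sum_alternating_choose_mul_choose_add {M k : ℕ} (hk : k < M) (m : ℕ) :
    ∑ j ∈ range (k + 1), (-1 : R) ^ j * M.choose (k - j) * (M + m + j).choose (m + 1 + j)
      = (M + m).choose (m + 1 + k) * (m + k).choose k := by
  induction k generalizing m with
  | zero => simp
  | succ k ih =>
    have hshift : ∀ j ∈ range (k + 1), (-1 : R) ^ (j + 1) * M.choose (k + 1 - (j + 1))
          * (M + m + (j + 1)).choose (m + 1 + (j + 1))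
        = -((-1) ^ j * M.choose (k - j) * (M + (m + 1) + j).choose (m + 1 + 1 + j)) := by
      intro j _
      rw [Nat.add_sub_add_right, pow_succ]
      ring_nf
    rw [sum_range_succ', sum_congr rfl hshift, sum_neg_distrib, ih (by omega)]
    have hstep := congrArg (Nat.cast : ℕ → R)
      (Nat.choose_mul_choose_add_step (M := M) (K := k) (by omega) m)
    push_cast at hstep
    simp only [pow_zero, one_mul, Nat.sub_zero, add_zero]
    ring_nf at hstep ⊢
    linear_combination -hstep

theorem sum_alternating_choose_mul_choose_sub {M k : ℕ} (hk : k < M) (i : ℕ) :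
    ∑ j ∈ range (k + 1), (-1 : R) ^ j * M.choose (k - j) *
        (if j ≤ i then ((M + i - j - 1).choose (i - j) : R) else 0)
      = (M + i).choose k * (M + i - k - 1).choose i := by
  induction k generalizing i with
  | zero => simp
  | succ k ih =>
    rw [sum_range_succ']
    cases i with
    | zero => simp
    | succ i =>
      have hshift : ∀ j ∈ range (k + 1), (-1 : R) ^ (j + 1) * M.choose (k + 1 - (j + 1)) *
            (if j + 1 ≤ i + 1 then ((M + (i + 1) - (j + 1) - 1).choose (i + 1 - (j + 1)) : R)
              else 0)
          = -((-1) ^ j * M.choose (k - j) *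
            (if j ≤ i then ((M + i - j - 1).choose (i - j) : R) else 0)) := by
        intro j _
        simp only [Nat.add_sub_add_right, Nat.add_le_add_iff_right, pow_succ,
          show M + (i + 1) - (j + 1) = M + i - j by omega]
        ring
      rw [sum_congr rfl hshift, sum_neg_distrib, ih (by omega),
        show M + (i + 1) - (k + 1) - 1 = M + i - k - 1 by omega,
        show M + (i + 1) - 0 - 1 = M + i by omega]
      have hstep := congrArg (Nat.cast : ℕ → R) (Nat.choose_mul_choose_sub_step hk i)
      push_cast at hstep
      simp only [pow_zero, one_mul, Nat.sub_zero, zero_le, if_true]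
      ring_nf at hstep ⊢
      linear_combination -hstep

theorem sum_alternating_choose_mul_choose_sub_one {M K : ℕ} (hK : K ≤ M) :
    ∑ i ∈ range (K + 1), (-1 : R) ^ i * M.choose (K - i) * (M + i - 1).choose i
      = if K = 0 then 1 else 0 := by
  cases K with
  | zero => simp
  | succ K =>
    have hshift : ∀ i ∈ range (K + 1), (-1 : R) ^ (i + 1) * M.choose (K + 1 - (i + 1))
          * (M + (i + 1) - 1).choose (i + 1)
        = -((-1) ^ i * M.choose (K - i) * (M + 0 + i).choose (0 + 1 + i)) := by
      intro i _
      rw [Nat.add_sub_add_right, pow_succ, show M + (i + 1) - 1 = M + 0 + i by omega,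
        show i + 1 = 0 + 1 + i by omega]
      ring
    rw [sum_range_succ', sum_congr rfl hshift, sum_neg_distrib,
      sum_alternating_choose_mul_choose_add (by omega) 0]
    simp [add_comm 1 K]

theorem sum_alternating_choose_mul_sum_choose {M k : ℕ} (hk : k < M) (x : ℕ → R) :
    ∑ j ∈ range (k + 1), (-1 : R) ^ j * M.choose (k - j) *
        ∑ t ∈ range (j + 1), ((M + j - t - 1).choose (j - t) : R) * x t
      = (-1) ^ k * x k := by
  have hinner : ∀ t ∈ range (k + 1), ∑ j ∈ Ico t (k + 1),
      (-1 : R) ^ j * M.choose (k - j) * ((M + j - t - 1).choose (j - t) * x t)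
        = if t = k then (-1) ^ k * x k else 0 := by
    intro t ht
    simp only [mem_range] at ht
    have hrange : ∑ i ∈ range (k + 1 - t), (-1 : R) ^ (t + i) * M.choose (k - (t + i))
          * ((M + (t + i) - t - 1).choose (t + i - t) * x t)
        = (-1) ^ t * x t * ∑ i ∈ range (k - t + 1), (-1 : R) ^ i * M.choose (k - t - i)
          * (M + i - 1).choose i := by
      rw [mul_sum, show k + 1 - t = k - t + 1 by omega]
      refine sum_congr rfl fun i _ => ?_
      rw [Nat.add_sub_cancel_left, Nat.sub_add_eq, show M + (t + i) - t = M + i by omega, pow_add]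
      ring
    rw [sum_Ico_eq_sum_range, hrange, sum_alternating_choose_mul_choose_sub_one (by omega)]
    by_cases htk : t = k
    · simp [htk]
    · simp [htk, show k - t ≠ 0 by omega]
  simp_rw [mul_sum]
  rw [sum_comm' (t' := range (k + 1)) (s' := fun t => Ico t (k + 1))
    (fun j t => by simp only [mem_range, mem_Ico]; omega), sum_congr rfl hinner,
    sum_ite_eq' (range (k + 1)), if_pos (self_mem_range_succ k)]

end AlternatingSums

theorem isBigO_add_natCast_cpow_neg (w s : ℂ) :
    (fun n : ℕ => (w + n) ^ (-s)) =O[atTop] fun n => (n : ℝ) ^ (-s.re) := by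
  have hnorm : (fun n : ℕ => ‖w + n‖) =Θ[atTop] fun n => (n : ℝ) := by
    have hequiv : (fun n : ℕ => (n : ℂ) + w) ~[atTop] fun n => (n : ℂ) :=
      IsEquivalent.refl.add_const_of_norm_tendsto_atTop
        (by simpa [Function.comp_def] using tendsto_natCast_atTop_atTop)
    simpa [add_comm] using hequiv.isTheta.norm_left.norm_right
  calc (fun n : ℕ => (w + n) ^ (-s)) =O[atTop] fun n => ‖w + n‖ ^ (-s).re :=
        isBigO_cpow_rpow (isBoundedUnder_const (a := |(-s).im|))
    _ =O[atTop] fun n => (n : ℝ) ^ (-s.re) :=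
        (hnorm.rpow (.of_forall fun _ => norm_nonneg _)
          (.of_forall fun _ => Nat.cast_nonneg _)).isBigO

theorem isBigO_add_choose_pow (p : ℕ) :
    (fun n : ℕ => ((p + n).choose n : ℂ)) =O[atTop] fun n => (n : ℝ) ^ p := by
  refine IsBigO.of_bound (2 ^ p) ?_
  filter_upwards [eventually_ge_atTop 1] with n hn
  have hle : (p + n).choose n ≤ 2 ^ p * n ^ p := calc
    (p + n).choose n = (n + p).choose p := by rw [add_comm, Nat.choose_symm_add]
    _ ≤ (n + p + 1 - p) ^ p := Nat.choose_le_sub_pow _ _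
    _ ≤ (2 * n) ^ p := Nat.pow_le_pow_left (by omega) p
    _ = 2 ^ p * n ^ p := mul_pow _ _ _
  simpa using (Nat.cast_le (α := ℝ)).2 hle

theorem hasSum_multipleHurwitzZeta {m : ℕ} (hm : 0 < m) {s : ℂ} (hs : (m : ℝ) < s.re) (w : ℂ) :
    HasSum (fun l : ℕ => ((m + l - 1).choose l : ℂ) * (w + l) ^ (-s))
      (multipleHurwitzZeta m s w) := by
  obtain ⟨p, rfl⟩ : ∃ p, m = p + 1 := ⟨m - 1, by omega⟩
  push_cast at hs
  have hdecay : Summable fun n : ℕ => (n : ℝ) ^ ((p : ℝ) - s.re) :=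
    Real.summable_nat_rpow.2 (by linarith)
  refine (summable_of_isBigO_nat hdecay ?_).hasSum
  have hprod := (isBigO_add_choose_pow p).mul (isBigO_add_natCast_cpow_neg w s)
  refine (hprod.congr_left fun n => by rw [Nat.add_right_comm, Nat.add_sub_cancel]).trans
    (EventuallyEq.isBigO (.of_forall fun n => ?_))
  dsimp only
  rw [← Real.rpow_natCast, ← Real.rpow_add' (Nat.cast_nonneg n) (ne_of_lt (by linarith)),
    sub_eq_add_neg]

section ShiftedSeries

variable {m : ℕ} {s : ℂ}

theorem hasSum_multipleHurwitzZeta_sub_natCast (hm : 0 < m) (hs : (m : ℝ) < s.re) (w : ℂ)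
    (j : ℕ) :
    HasSum (fun i : ℕ => ((m + i + j).choose (i + 1 + j) : ℂ) * (w + ((i : ℂ) + 1)) ^ (-s))
      (multipleHurwitzZeta m s (w - j)
        - ∑ t ∈ range (j + 1), ((m + j - t - 1).choose (j - t) : ℂ) * (w - t) ^ (-s)) := by
  have hhead : ∑ t ∈ range (j + 1), ((m + j - t - 1).choose (j - t) : ℂ) * (w - t) ^ (-s)
      = ∑ l ∈ range (j + 1), ((m + l - 1).choose l : ℂ) * (w - j + l) ^ (-s) := by
    conv_rhs => rw [← sum_range_reflect]
    refine sum_congr rfl fun t ht => ?_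
    simp only [mem_range] at ht
    rw [show j + 1 - 1 - t = j - t by omega, show m + (j - t) - 1 = m + j - t - 1 by omega,
      Nat.cast_sub (by omega : t ≤ j)]
    ring_nf
  rw [hhead]
  refine ((hasSum_nat_add_iff' (j + 1)).2 (hasSum_multipleHurwitzZeta hm hs (w - j))).congr_fun
    fun i => ?_
  rw [show m + (i + (j + 1)) - 1 = m + i + j by omega, show i + (j + 1) = i + 1 + j by omega]
  push_cast
  ring_nf

theorem hasSum_multipleHurwitzZeta_add_natCast_add_one (hm : 0 < m) (hs : (m : ℝ) < s.re) (w : ℂ)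
    (j : ℕ) :
    HasSum (fun i : ℕ => (if j ≤ i then ((m + i - j - 1).choose (i - j) : ℂ) else 0)
        * (w + ((i : ℂ) + 1)) ^ (-s))
      (multipleHurwitzZeta m s (w + j + 1)) := by
  refine ((add_left_injective j).hasSum_iff fun i hi => ?_).1 ?_
  · have : ¬ j ≤ i := fun hji => hi ⟨i - j, Nat.sub_add_cancel hji⟩
    simp [this]
  · refine (hasSum_multipleHurwitzZeta hm hs (w + j + 1)).congr_fun fun l => ?_
    simp only [Function.comp_apply, le_add_iff_nonneg_left, zero_le, if_true, Nat.add_sub_cancel,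
      show m + (l + j) - j - 1 = m + l - 1 by omega]
    push_cast
    ring_nf

end ShiftedSeries

theorem hasSum_alternating_choose_mul_multipleHurwitzZeta {m k : ℕ} (hk : k < m) {s : ℂ}
    (hs : (m : ℝ) < s.re) (w : ℂ) :
    HasSum (fun i : ℕ => (((m + i).choose (i + 1 + k) * (i + k).choose k
          + (m + i).choose k * (m + i - k - 1).choose i : ℕ) : ℂ) * (w + ((i : ℂ) + 1)) ^ (-s))
      ((∑ j ∈ range (k + 1), (-1 : ℂ) ^ j * (m.choose (k - j) : ℂ) *
          (multipleHurwitzZeta m s (w - j) + multipleHurwitzZeta m s (w + j + 1)))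
        - (-1) ^ k * (w - k) ^ (-s)) := by
  have hm : 0 < m := by omega
  have hsum := hasSum_sum fun j (_ : j ∈ range (k + 1)) =>
    ((hasSum_multipleHurwitzZeta_sub_natCast hm hs w j).add
      (hasSum_multipleHurwitzZeta_add_natCast_add_one hm hs w j)).mul_left
        ((-1 : ℂ) ^ j * (m.choose (k - j) : ℂ))
  have hvalue : ∑ j ∈ range (k + 1), (-1 : ℂ) ^ j * (m.choose (k - j) : ℂ) *
        (multipleHurwitzZeta m s (w - j) + multipleHurwitzZeta m s (w + j + 1))
          - (-1) ^ k * (w - k) ^ (-s)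
      = ∑ j ∈ range (k + 1), (-1 : ℂ) ^ j * (m.choose (k - j) : ℂ) *
        (multipleHurwitzZeta m s (w - j)
          - ∑ t ∈ range (j + 1), ((m + j - t - 1).choose (j - t) : ℂ) * (w - t) ^ (-s)
          + multipleHurwitzZeta m s (w + j + 1)) := by
    rw [← sum_alternating_choose_mul_sum_choose hk fun t => (w - t) ^ (-s), ← sum_sub_distrib]
    refine sum_congr rfl fun j _ => ?_
    ring
  rw [hvalue]
  refine hsum.congr_fun fun i => ?_
  push_cast
  rw [← sum_alternating_choose_mul_choose_add hk i, ← sum_alternating_choose_mul_choose_sub hk i,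
    add_mul, sum_mul, sum_mul, ← sum_add_distrib]
  refine sum_congr rfl fun j _ => ?_
  ring

theorem multiple_hurwitz_zeta_binomial_identity_general
    (n : ℕ) (hn : 0 < n) (k : ℕ) (hk : k ≤ n - 1)
    (z : ℂ) (s : ℂ) (hs : (2 * n : ℝ) < s.re) :
    ∑' i : ℕ,
        ((((2 * n + i).choose (i + 1 + k) * (i + k).choose k
            + (2 * n + i).choose k * (2 * n + i - k - 1).choose i : ℕ)) : ℂ) *
          (z + ((i : ℂ) + 1)) ^ (-s) =
      (∑ j ∈ Finset.range (k + 1),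
        (-1 : ℂ) ^ j * (((2 * n).choose (k - j) : ℕ) : ℂ) *
          (multipleHurwitzZeta (2 * n) s (z - (j : ℂ)) +
            multipleHurwitzZeta (2 * n) s (z + (j : ℂ) + 1)))
      + (-1 : ℂ) ^ (k + 1) * (z - (k : ℂ)) ^ (-s) := by
  rw [(hasSum_alternating_choose_mul_multipleHurwitzZeta (m := 2 * n) (by omega)
    (by exact_mod_cast hs) z).tsum_eq, pow_succ]
  ring

/-- Let `n` be a positive integer and `0 ≤ k ≤ n - 1`.  For every
`z ∈ ℂ` with `z, z-1, ..., z-k ∉ (-∞,0]` and every `s` with `Re s > 2n`, one has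
`∑_{l=1}^∞ [C(2n+l-1, l+k) C(l+k-1, k) + C(2n+l-1, k) C(2n+l-k-2, l-1)] (z+l)^{-s}
  = ∑_{j=0}^{k} (-1)^j C(2n, k-j) (ζ_{2n}(s, z-j) + ζ_{2n}(s, z+j+1))
    + (-1)^{k+1} (z-k)^{-s}`. -/
theorem multiple_hurwitz_zeta_binomial_identity
    (n : ℕ) (hn : 0 < n) (k : ℕ) (hk : k ≤ n - 1)
    (z : ℂ) (hz : ∀ j : ℕ, j ≤ k → ¬((z - (j : ℂ)).im = 0 ∧ (z - (j : ℂ)).re ≤ 0))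
    (s : ℂ) (hs : (2 * n : ℝ) < s.re) :
    ∑' i : ℕ,
        ((((2 * n + i).choose (i + 1 + k) * (i + k).choose k
            + (2 * n + i).choose k * (2 * n + i - k - 1).choose i : ℕ)) : ℂ) *
          (z + ((i : ℂ) + 1)) ^ (-s) =
      (∑ j ∈ Finset.range (k + 1),
        (-1 : ℂ) ^ j * (((2 * n).choose (k - j) : ℕ) : ℂ) *
          (multipleHurwitzZeta (2 * n) s (z - (j : ℂ)) +
            multipleHurwitzZeta (2 * n) s (z + (j : ℂ) + 1)))
      + (-1 : ℂ) ^ (k + 1) * (z - (k : ℂ)) ^ (-s) :=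
  multiple_hurwitz_zeta_binomial_identity_general n hn k hk z s hs
end
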